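/- arXiv:math/0701385 — 5 statements merged into one kernel-verified Lean document; each statement's English description precedes it below -/
import Mathlib

section
/- Let λ ∈ ℂ be nonzero and let A = [[1,0],[−1/(2λ),1]] ∈ SL(2,ℂ). Then A·S·A⁻¹ = S and A·(T_λ·S·T_λ⁻¹)·A⁻¹ = T_{−2λ²}. Consequently the map g ↦ A⁻¹·g·A is an injective group homomorphism from the subgroup G_{−2λ²} of SL(2,ℂ) generated by S and T_{−2λ²} into the subgroup G_λ generated by S and T_λ (its image is the subgroup generated by S and T_λ·S·T_λ⁻¹). -/
noncomputable section

abbrev SL2 := Matrix.SpecialLinearGroup (Fin 2) ℂ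

def S : SL2 := ⟨!![1, 0; 1, 1], by norm_num [Matrix.det_fin_two_of]⟩

def T (lam : ℂ) : SL2 := ⟨!![1, 2 * lam; 0, 1], by norm_num [Matrix.det_fin_two_of]⟩

def A (lam : ℂ) : SL2 := ⟨!![1, 0; -1 / (2 * lam), 1], by norm_num [Matrix.det_fin_two_of]⟩

/-
Both identities are direct 2 × 2 matrix computations: A and S are both lower unitriangular, so
they commute, and T_λ S T_λ⁻¹ = [[1 + 2λ, -4λ²], [1, 1 - 2λ]] is carried by A to T_{-2λ²}. Hence
conjugation by A⁻¹, which is injective on all of SL(2, ℂ), maps the generators S, T_{-2λ²} of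
G_{-2λ²} to S and T_λ S T_λ⁻¹, both of which lie in G_λ.
-/

section Conjugation

variable {G : Type*} [Group G]

theorem Subgroup.closure_pair_conj_le (x y : G) :
    closure {x, y * x * y⁻¹} ≤ closure {x, y} := by
  have hx : x ∈ closure {x, y} := subset_closure (by simp)
  have hy : y ∈ closure {x, y} := subset_closure (by simp)
  rw [closure_le, Set.insert_subset_iff, Set.singleton_subset_iff]
  exact ⟨hx, mul_mem (mul_mem hy hx) (inv_mem hy)⟩

theorem Subgroup.exists_injective_conj_restrict (a : G) (s : Set G) :
    ∃ φ : closure s →* G, Function.Injective φ ∧ (∀ g, φ g = a⁻¹ * (g : G) * a) ∧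
      φ.range = closure ((fun g ↦ a⁻¹ * g * a) '' s) := by
  set c : G →* G := (MulAut.conj a⁻¹).toMonoidHom
  have hc : ∀ g, c g = a⁻¹ * g * a := fun g ↦ by simp [c]
  refine ⟨c.comp (closure s).subtype,
    (MulAut.conj a⁻¹).injective.comp Subtype.val_injective, fun g ↦ hc g, ?_⟩
  rw [MonoidHom.range_comp, range_subtype, MonoidHom.map_closure]
  exact congrArg closure (Set.image_congr fun g _ ↦ hc g)

theorem inv_mul_mul_eq_of_mul_eq_mul {a x y : G} (h : a * x = y * a) : a⁻¹ * y * a = x := by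
  rw [mul_assoc, ← h, inv_mul_cancel_left]

end Conjugation

theorem T_mul_T (a b : ℂ) : T a * T b = T (a + b) := by
  ext i j
  simp only [Matrix.SpecialLinearGroup.coe_mul]
  fin_cases i <;> fin_cases j <;> simp [T, Matrix.mul_apply, Fin.sum_univ_two]; ring

theorem T_inv (lam : ℂ) : (T lam)⁻¹ = T (-lam) := by
  refine inv_eq_of_mul_eq_one_right ?_
  rw [T_mul_T, add_neg_cancel]
  ext i j
  fin_cases i <;> fin_cases j <;> simp [T]

theorem A_mul_S (lam : ℂ) : A lam * S = S * A lam := by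
  ext i j
  simp only [Matrix.SpecialLinearGroup.coe_mul]
  fin_cases i <;> fin_cases j <;> simp [A, S, Matrix.mul_apply, Fin.sum_univ_two, add_comm]

theorem A_mul_conj_S (lam : ℂ) (hlam : lam ≠ 0) :
    A lam * (T lam * S * (T lam)⁻¹) = T (-2 * lam ^ 2) * A lam := by
  rw [T_inv]
  ext i j
  simp only [Matrix.SpecialLinearGroup.coe_mul]
  fin_cases i <;> fin_cases j <;> simp [A, S, T, Matrix.mul_apply, Fin.sum_univ_two] <;>
    field_simp <;> ring

theorem conjugation_subgroup (lam : ℂ) (hlam : lam ≠ 0) :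
    A lam * S * (A lam)⁻¹ = S ∧
    A lam * (T lam * S * (T lam)⁻¹) * (A lam)⁻¹ = T (-2 * lam ^ 2) ∧
    ∃ φ : (Subgroup.closure ({S, T (-2 * lam ^ 2)} : Set SL2)) →* SL2,
      Function.Injective φ ∧
      (∀ g, φ g = (A lam)⁻¹ * (g : SL2) * A lam) ∧
      MonoidHom.range φ = Subgroup.closure ({S, T lam * S * (T lam)⁻¹} : Set SL2) ∧
      Subgroup.closure ({S, T lam * S * (T lam)⁻¹} : Set SL2)
        ≤ Subgroup.closure ({S, T lam} : Set SL2) := by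
  obtain ⟨φ, hinj, hφ, hrange⟩ :=
    Subgroup.exists_injective_conj_restrict (A lam) {S, T (-2 * lam ^ 2)}
  refine ⟨mul_inv_eq_of_eq_mul (A_mul_S lam), mul_inv_eq_of_eq_mul (A_mul_conj_S lam hlam),
    φ, hinj, hφ, ?_, Subgroup.closure_pair_conj_le S (T lam)⟩
  rw [hrange, Set.image_pair, inv_mul_mul_eq_of_mul_eq_mul (A_mul_S lam),
    inv_mul_mul_eq_of_mul_eq_mul (A_mul_conj_S lam hlam)]

end
end

section
/- Let f : ℂ → ℂ be f(z) = −2z². If |λ| > 1/2, then there exists a natural number n such that w = f^[n](λ) satisfies |w| ≥ 2 and |Im w| ≥ 1 − (Re w)²/4 (i.e. the n-th iterate of λ lies in the closed classical T-Schottky region {x+iy : |y| ≥ 1 − x²/4}). -/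
/-!
Conjugating by `z ↦ c z` turns `z ↦ c z²` into `z ↦ z²`, so `‖f^[n] λ‖ = (2‖λ‖)^(2^n) / 2`.
For `|λ| > 1/2` this grows doubly exponentially and eventually reaches `2`; and every `w` with
`|w| ≥ 2` lies in the Schottky region, since `|Im w| ≥ √(4 - (Re w)²) ≥ 1 - (Re w)²/4`.
-/

theorem mul_iterate_mul_sq {M : Type*} [CommMonoid M] (c z : M) (n : ℕ) :
    c * (fun x : M => c * x ^ 2)^[n] z = (c * z) ^ 2 ^ n := by
  induction n with
  | zero => simp
  | succ n ih =>
    rw [Function.iterate_succ_apply', pow_succ 2, pow_mul, ← ih, mul_pow, sq c, mul_assoc]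

theorem norm_mul_norm_iterate_mul_sq {K : Type*} [NormedField K] (c z : K) (n : ℕ) :
    ‖c‖ * ‖(fun x : K => c * x ^ 2)^[n] z‖ = (‖c‖ * ‖z‖) ^ 2 ^ n := by
  rw [← norm_mul, mul_iterate_mul_sq, norm_pow, norm_mul]

theorem Complex.one_sub_re_sq_div_four_le_abs_im {w : ℂ} (hw : 2 ≤ ‖w‖) :
    1 - w.re ^ 2 / 4 ≤ |w.im| := by
  have hsq : 4 ≤ w.re ^ 2 + |w.im| ^ 2 := by
    rw [sq_abs, sq, sq, ← Complex.normSq_apply, ← Complex.sq_norm]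
    nlinarith
  nlinarith [abs_nonneg w.im]

theorem iterate_reaches_schottky_region (lam : ℂ)
    (h : ‖lam‖ > 1 / 2) :
    ∃ n : ℕ, ∀ w : ℂ, w = (fun z : ℂ => -2 * z ^ 2)^[n] lam →
      ‖w‖ ≥ 2 ∧ |w.im| ≥ 1 - w.re ^ 2 / 4 := by
  have hc : ‖(-2 : ℂ)‖ = 2 := by norm_num
  have hb : 1 < 2 * ‖lam‖ := by linarith
  obtain ⟨n, hn⟩ := pow_unbounded_of_one_lt (4 : ℝ) hb
  refine ⟨n, fun w hw => ?_⟩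
  have hnorm : 2 * ‖w‖ = (2 * ‖lam‖) ^ 2 ^ n := by
    rw [hw, ← hc, norm_mul_norm_iterate_mul_sq]
  have hgrowth : (2 * ‖lam‖) ^ n ≤ (2 * ‖lam‖) ^ 2 ^ n :=
    pow_le_pow_right₀ hb.le Nat.lt_two_pow_self.le
  have hw2 : 2 ≤ ‖w‖ := by linarith
  exact ⟨hw2, Complex.one_sub_re_sq_div_four_le_abs_im hw2⟩
end

section
/- Let S = [[1,0],[1,1]] and T_λ = [[1,2λ],[0,1]] in SL(2,ℂ), let f(z) = −2z², and say that the pair (S,T_μ) satisfies a relation if there exists a nontrivial element w of the free group on two generators whose evaluation at (S,T_μ) equals I or −I in SL(2,ℂ). If λ ≠ 0, n ≥ 1, and the pair (S, T_{f^[n](λ)}) satisfies a relation (i.e. G_{f^[n](λ)} is non-free), then the pair (S, T_λ) satisfies a relation (i.e. G_λ is non-free). -/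
noncomputable section

/-- The evaluation of a word in the free group on two generators at a pair `(a, b)`. -/
def evalWord (w : FreeGroup (Fin 2)) (a b : SL2) : SL2 :=
  FreeGroup.lift (fun i : Fin 2 => if i = 0 then a else b) w

/-- The pair `(a, b)` satisfies a relation: some nontrivial word in the free group on
two generators evaluates at `(a, b)` to `I` or `-I` in `SL(2, ℂ)`. -/
def HasRelation (a b : SL2) : Prop :=
  ∃ w : FreeGroup (Fin 2), w ≠ 1 ∧
    (((evalWord w a b : SL2) : Matrix (Fin 2) (Fin 2) ℂ) = 1 ∨
     ((evalWord w a b : SL2) : Matrix (Fin 2) (Fin 2) ℂ) = -1)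

/-!
A relation for `(S, T_μ)` with `μ = -2λ²` is transported to one for `(S, T_λ)` in two moves.
Conjugation by the lower shear `[[1, 0], [1/(2λ), 1]]` fixes `S` and sends `T_μ` to
`T_λ S T_λ⁻¹`, so `(S, T_λ S T_λ⁻¹)` satisfies the conjugated relation. Substituting
`y ↦ y x y⁻¹` in that word gives a relation for `(S, T_λ)`, and it stays nontrivial because this
substitution is an injective endomorphism of the free group: in `F(ℤ) ⋊ ℤ`, sending `x` to the
generator `0` and `y` to the shift, `y x y⁻¹` goes to the generator `1`.
-/

open FreeGroup SemidirectProduct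

def FreeGroup.shift : Multiplicative ℤ →* MulAut (FreeGroup ℤ) :=
  MonoidHom.mk' (fun n => freeGroupCongr (Equiv.addRight n.toAdd)) fun a b => by
    apply MulEquiv.toMonoidHom_injective
    refine FreeGroup.ext_hom _ _ fun k => ?_
    simp [MulAut.mul_apply, add_left_comm, add_comm]

def conjSubst : FreeGroup (Fin 2) →* FreeGroup (Fin 2) :=
  FreeGroup.lift fun i => if i = 0 then of 0 else of 1 * of 0 * (of 1)⁻¹

def conjSubstEmbedding : FreeGroup (Fin 2) →* FreeGroup ℤ ⋊[FreeGroup.shift] Multiplicative ℤ :=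
  FreeGroup.lift fun i => if i = 0 then inl (of 0) else inr (Multiplicative.ofAdd 1)

lemma conjSubstEmbedding_comp_conjSubst :
    conjSubstEmbedding.comp conjSubst = inl.comp (FreeGroup.map fun i : Fin 2 => (i : ℤ)) := by
  refine FreeGroup.ext_hom _ _ fun i => ?_
  fin_cases i
  · simp [conjSubstEmbedding, conjSubst]
  · simp [conjSubstEmbedding, conjSubst]
    rw [← _root_.map_inv (inr (φ := FreeGroup.shift)), ← inl_aut]
    simp [FreeGroup.shift]

lemma conjSubst_injective : Function.Injective conjSubst := by
  have hinj : Function.Injective (conjSubstEmbedding.comp conjSubst) := by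
    rw [conjSubstEmbedding_comp_conjSubst]
    exact inl_injective.comp (FreeGroup.map_injective fun i j h => Fin.ext (by exact_mod_cast h))
  exact Function.Injective.of_comp (f := conjSubstEmbedding) hinj

lemma evalWord_conjSubst (w : FreeGroup (Fin 2)) (a b : SL2) :
    evalWord (conjSubst w) a b = evalWord w a (b * a * b⁻¹) := by
  have : (FreeGroup.lift fun i : Fin 2 => if i = 0 then a else b).comp conjSubst =
      FreeGroup.lift fun i => if i = 0 then a else b * a * b⁻¹ :=
    FreeGroup.ext_hom _ _ fun i => by fin_cases i <;> simp [conjSubst]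
  exact DFunLike.congr_fun this w

lemma evalWord_conj (w : FreeGroup (Fin 2)) (a b c : SL2) :
    evalWord w (c * a * c⁻¹) (c * b * c⁻¹) = c * evalWord w a b * c⁻¹ := by
  have : (FreeGroup.lift fun i : Fin 2 => if i = 0 then c * a * c⁻¹ else c * b * c⁻¹) =
      (MulAut.conj c).toMonoidHom.comp (FreeGroup.lift fun i => if i = 0 then a else b) :=
    FreeGroup.ext_hom _ _ fun i => by fin_cases i <;> simp
  exact DFunLike.congr_fun this w

lemma Matrix.SpecialLinearGroup.coe_conj_eq_one_or_neg_one {n R : Type*} [Fintype n]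
    [DecidableEq n] [CommRing R] {g : SpecialLinearGroup n R} (c : SpecialLinearGroup n R)
    (hg : (g : Matrix n n R) = 1 ∨ (g : Matrix n n R) = -1) :
    ((c * g * c⁻¹ : SpecialLinearGroup n R) : Matrix n n R) = 1 ∨
      ((c * g * c⁻¹ : SpecialLinearGroup n R) : Matrix n n R) = -1 := by
  have hc : (c : Matrix n n R) * ((c⁻¹ : SpecialLinearGroup n R) : Matrix n n R) = 1 := by
    rw [← coe_mul, mul_inv_cancel, coe_one]
  simp only [coe_mul]
  rcases hg with hg | hg
  · left; rw [hg, mul_one, hc]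
  · right; rw [hg, mul_neg_one, neg_mul, hc]

lemma HasRelation.conj {a b : SL2} (c : SL2) (h : HasRelation a b) :
    HasRelation (c * a * c⁻¹) (c * b * c⁻¹) := by
  obtain ⟨w, hw, hval⟩ := h
  refine ⟨w, hw, ?_⟩
  rw [evalWord_conj]
  exact Matrix.SpecialLinearGroup.coe_conj_eq_one_or_neg_one c hval

lemma HasRelation.of_mul_mul_inv {a b : SL2} (h : HasRelation a (b * a * b⁻¹)) :
    HasRelation a b := by
  obtain ⟨w, hw, hval⟩ := h
  refine ⟨conjSubst w, (_root_.map_ne_one_iff conjSubst conjSubst_injective).2 hw, ?_⟩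
  rwa [evalWord_conjSubst]

def lowerShear (t : ℂ) : SL2 := ⟨!![1, 0; t, 1], by norm_num [Matrix.det_fin_two_of]⟩

lemma lowerShear_mul_S (t : ℂ) : lowerShear t * S = S * lowerShear t := by
  ext i j
  simp only [Matrix.SpecialLinearGroup.coe_mul]
  fin_cases i <;> fin_cases j <;> simp [lowerShear, S, Matrix.mul_apply, add_comm]

lemma T_neg (lam : ℂ) : T (-lam) = (T lam)⁻¹ := by
  refine eq_inv_of_mul_eq_one_left ?_
  ext i j
  simp only [Matrix.SpecialLinearGroup.coe_mul]
  fin_cases i <;> fin_cases j <;> simp [T, Matrix.mul_apply]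

lemma lowerShear_mul_T {lam : ℂ} (hlam : lam ≠ 0) :
    lowerShear (2 * lam)⁻¹ * T (-2 * lam ^ 2) = T lam * S * T (-lam) * lowerShear (2 * lam)⁻¹ := by
  ext i j
  simp only [Matrix.SpecialLinearGroup.coe_mul]
  fin_cases i <;> fin_cases j <;> simp [lowerShear, S, T, Matrix.mul_apply] <;> field_simp <;> ring

lemma HasRelation.of_T_neg_two_mul_sq {lam : ℂ} (hlam : lam ≠ 0)
    (h : HasRelation S (T (-2 * lam ^ 2))) : HasRelation S (T lam) := by
  have hS := mul_inv_eq_of_eq_mul (lowerShear_mul_S (2 * lam)⁻¹)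
  have hT := mul_inv_eq_of_eq_mul (lowerShear_mul_T hlam)
  have h' := h.conj (lowerShear (2 * lam)⁻¹)
  rw [hS, hT, T_neg] at h'
  exact h'.of_mul_mul_inv

theorem nonfree_pulls_back_general (lam : ℂ) (hlam : lam ≠ 0) (n : ℕ)
    (h : HasRelation S (T ((fun z : ℂ => -2 * z ^ 2)^[n] lam))) :
    HasRelation S (T lam) := by
  induction n generalizing lam with
  | zero => exact h
  | succ k ih =>
    rw [Function.iterate_succ_apply] at h
    exact (ih _ (mul_ne_zero (by norm_num) (pow_ne_zero 2 hlam)) h).of_T_neg_two_mul_sq hlam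

theorem nonfree_pulls_back (lam : ℂ) (hlam : lam ≠ 0) (n : ℕ) (hn : 1 ≤ n)
    (h : HasRelation S (T ((fun z : ℂ => -2 * z ^ 2)^[n] lam))) :
    HasRelation S (T lam) :=
  nonfree_pulls_back_general lam hlam n h

end
end

section
/- Let λ = (1−i)/2, let S = [[1,0],[1,1]] and T = T_λ = [[1,1−i],[0,1]] in SL(2,ℂ), let T̃ = T·S·T⁻¹, and set M = S⁻¹·T̃·S·T̃⁻¹. Then the map ℤ × ℤ → SL(2,ℂ) given by (m,n) ↦ T^m · M^n is an injective group homomorphism whose image is contained in the subgroup G_λ generated by S and T; in particular G_λ contains a subgroup isomorphic to ℤ × ℤ. -/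
/-!
For `a = 2λ` the commutator `M = ⁅S⁻¹, T_λ S T_λ⁻¹⁆` has entries polynomial in `a`, and when
`(a - 1)² = -1` it collapses to the parabolic element `-T_{-2}`, which commutes with `T_λ`.
Since the translations `T_μ` form a copy of `(ℂ, +)`, the relation `T_λ^m M^n = 1` squares to
`T_{2mλ - 4n} = 1`, and `λ ∉ ℝ` forces `m = n = 0`.
-/

noncomputable section

open Matrix.SpecialLinearGroup
open scoped commutatorElement

theorem coe_S : (S : Matrix (Fin 2) (Fin 2) ℂ) = !![1, 0; 1, 1] := rfl

theorem coe_T (a : ℂ) : (T a : Matrix (Fin 2) (Fin 2) ℂ) = !![1, 2 * a; 0, 1] := rfl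

theorem T_zero : T 0 = 1 :=
  Subtype.ext <| by rw [coe_T, coe_one, Matrix.one_fin_two, mul_zero]

theorem T_add (a b : ℂ) : T (a + b) = T a * T b :=
  Subtype.ext <| by simp only [coe_mul, coe_T, Matrix.mul_fin_two]; norm_num; ring

theorem T_zpow (a : ℂ) (m : ℤ) : T a ^ m = T (m * a) := by
  induction m using Int.induction_on with
  | zero => simp [T_zero]
  | succ k ih => rw [zpow_add_one, ih, ← T_add]; push_cast; ring_nf
  | pred k ih => rw [zpow_sub_one, ih, mul_inv_eq_iff_eq_mul, ← T_add]; push_cast; ring_nf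

theorem T_eq_one_iff {a : ℂ} : T a = 1 ↔ a = 0 := by
  refine ⟨fun h => ?_, fun h => h ▸ T_zero⟩
  simpa [coe_T] using congrArg (fun g : SL2 => (g : Matrix (Fin 2) (Fin 2) ℂ) 0 1) h

theorem commute_T (a b : ℂ) : Commute (T a) (T b) := by
  rw [Commute, SemiconjBy, ← T_add, ← T_add, add_comm]

theorem commutatorElement_S_inv_conj_eq_neg_T {lam : ℂ} (h : (2 * lam - 1) ^ 2 = -1) :
    ⁅S⁻¹, T lam * S * (T lam)⁻¹⁆ = -T (-2) := by
  apply Subtype.ext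
  simp only [commutatorElement_def, inv_inv, coe_mul, coe_inv, coe_neg, coe_S, coe_T,
    Matrix.adjugate_fin_two_of, Matrix.mul_fin_two]
  norm_num
  -- each entry differs from its target by a polynomial multiple of `(2λ - 1)² + 1`
  refine ⟨⟨?_, ?_⟩, ?_, ?_⟩
  · linear_combination (2 * lam + 1) * h
  · linear_combination (-(2 * lam) ^ 2 - 2 * (2 * lam) - 2) * h
  · linear_combination (-(2 * lam)) * h
  · linear_combination ((2 * lam) ^ 2 + 2 * lam + 1) * h

theorem T_zpow_mul_neg_T_zpow_eq_one {lam : ℂ} (hlam : lam.im ≠ 0) {m n : ℤ}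
    (h : T lam ^ m * (-T (-2)) ^ n = 1) : m = 0 ∧ n = 0 := by
  have hcomm : Commute (T lam ^ m) ((-T (-2)) ^ n) :=
    (commute_T lam (-2)).neg_right.zpow_zpow m n
  have hsq : T lam ^ (2 * m) * T (-2) ^ (2 * n) = 1 := by
    rw [← (even_two_mul n).neg_zpow, mul_comm 2 m, mul_comm 2 n, zpow_mul, zpow_mul,
      ← hcomm.mul_zpow, h, one_zpow]
  rw [T_zpow, T_zpow, ← T_add, T_eq_one_iff] at hsq
  obtain rfl : m = 0 := by simpa [hlam] using congrArg Complex.im hsq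
  simpa using hsq

theorem zxz_subgroup :
    let lam : ℂ := (1 - Complex.I) / 2
    let T' : SL2 := T lam
    let Tt : SL2 := T' * S * T'⁻¹
    let M : SL2 := S⁻¹ * Tt * S * Tt⁻¹
    ∃ φ : Multiplicative (ℤ × ℤ) →* SL2,
      (∀ m n : ℤ, φ (Multiplicative.ofAdd (m, n)) = T' ^ m * M ^ n) ∧
      Function.Injective φ ∧
      ∀ p : Multiplicative (ℤ × ℤ), φ p ∈ Subgroup.closure ({S, T'} : Set SL2) := by
  intro lam T' Tt M
  have hlam : (2 * lam - 1) ^ 2 = -1 := by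
    rw [show 2 * lam - 1 = -Complex.I by simp only [lam]; ring, neg_sq, Complex.I_sq]
  have hM : M = -T (-2) := by
    rw [← commutatorElement_S_inv_conj_eq_neg_T hlam, commutatorElement_def, inv_inv]
  have hcomm : Commute T' M := hM ▸ (commute_T lam (-2)).neg_right
  refine ⟨((zpowersHom SL2 T').noncommCoprod (zpowersHom SL2 M)
      fun m n => hcomm.zpow_zpow _ _).comp (MulEquiv.prodMultiplicative ℤ ℤ).toMonoidHom,
    fun m n => rfl, ?_, ?_⟩
  · rw [injective_iff_map_eq_one]
    rintro ⟨m, n⟩ h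
    have hmn : T lam ^ m * (-T (-2)) ^ n = 1 := hM ▸ h
    obtain ⟨rfl, rfl⟩ := T_zpow_mul_neg_T_zpow_eq_one (by simp [lam]) hmn
    rfl
  · rintro ⟨m, n⟩
    set G := Subgroup.closure ({S, T'} : Set SL2)
    have hS : S ∈ G := Subgroup.subset_closure (by simp)
    have hT : T' ∈ G := Subgroup.subset_closure (by simp)
    have hTt : Tt ∈ G := mul_mem (mul_mem hT hS) (inv_mem hT)
    have hMG : M ∈ G := mul_mem (mul_mem (mul_mem (inv_mem hS) hTt) hS) (inv_mem hTt)
    exact mul_mem (zpow_mem hT m) (zpow_mem hMG n)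

end
end

section
/- Let f : ℂ → ℂ be f(z) = −2z² and let P = {w ∈ ℂ : |Re w| ≤ 2 and |Im w| = 1 − (Re w)²/4} (the Schottky parabolas). Then f⁻¹(P) = {z ∈ ℂ : |Re z| + |Im z| = 1}, i.e. the preimage of the Schottky parabolas under f is exactly the boundary of the square (diamond) with vertices ±1 and ±i. -/
/-!
Write `a = |Re z|`, `b = |Im z|`. Then `w = -2z²` has `Re w = -2(a² - b²)` and `|Im w| = 4ab`,
and the parabola equation `4ab = 1 - (a² - b²)²` factors as `((a + b)² - 1)(1 + (a - b)²) = 0`,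
i.e. `a + b = 1`. On that line `|a² - b²| = |a - b| ≤ 1`, so the constraint `|Re w| ≤ 2` is automatic.
-/

theorem four_mul_eq_one_sub_sq_sub_sq_iff {a b : ℝ} (ha : 0 ≤ a) (hb : 0 ≤ b) :
    4 * a * b = 1 - (a ^ 2 - b ^ 2) ^ 2 ↔ a + b = 1 := by
  have factor : (a ^ 2 - b ^ 2) ^ 2 + 4 * a * b - 1 = ((a + b) ^ 2 - 1) * (1 + (a - b) ^ 2) := by
    ring
  have hpos : 0 < 1 + (a - b) ^ 2 := by positivity
  calc 4 * a * b = 1 - (a ^ 2 - b ^ 2) ^ 2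
      ↔ ((a + b) ^ 2 - 1) * (1 + (a - b) ^ 2) = 0 := by constructor <;> intro h <;> linarith
    _ ↔ (a + b) ^ 2 = 1 := by rw [mul_eq_zero, sub_eq_zero, or_iff_left hpos.ne']
    _ ↔ a + b = 1 := pow_eq_one_iff_of_nonneg (by positivity) two_ne_zero

theorem abs_sq_sub_sq_le_one_of_add_eq_one {a b : ℝ} (ha : 0 ≤ a) (hb : 0 ≤ b)
    (h : a + b = 1) : |a ^ 2 - b ^ 2| ≤ 1 := by
  have hdiff : a ^ 2 - b ^ 2 = a - b := by
    rw [sq_sub_sq, h, one_mul]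
  rw [hdiff, abs_le]
  constructor <;> linarith

theorem Complex.re_neg_two_mul_sq (z : ℂ) :
    (-2 * z ^ 2).re = -2 * (|z.re| ^ 2 - |z.im| ^ 2) := by
  simp [pow_two]

theorem Complex.abs_im_neg_two_mul_sq (z : ℂ) :
    |(-2 * z ^ 2).im| = 4 * |z.re| * |z.im| := by
  have him : (-2 * z ^ 2).im = -4 * (z.re * z.im) := by
    simp only [pow_two, neg_mul, Complex.neg_im, Complex.mul_im, Complex.re_ofNat,
      Complex.im_ofNat, Complex.mul_re, zero_mul, add_zero, neg_inj]
    ring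
  rw [him, abs_mul, abs_mul, abs_neg, abs_of_pos four_pos, mul_assoc]

theorem preimage_of_schottky_parabolas :
    (fun z : ℂ => -2 * z ^ 2) ⁻¹'
        {w : ℂ | |w.re| ≤ 2 ∧ |w.im| = 1 - w.re ^ 2 / 4}
      = {z : ℂ | |z.re| + |z.im| = 1} := by
  ext z
  simp only [Set.mem_preimage, Set.mem_ofPred_eq, Complex.re_neg_two_mul_sq,
    Complex.abs_im_neg_two_mul_sq]
  set a := |z.re|
  set b := |z.im|
  have ha : 0 ≤ a := abs_nonneg _
  have hb : 0 ≤ b := abs_nonneg _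
  have hsq : (-2 * (a ^ 2 - b ^ 2)) ^ 2 / 4 = (a ^ 2 - b ^ 2) ^ 2 := by ring
  have habs : |-2 * (a ^ 2 - b ^ 2)| ≤ 2 ↔ |a ^ 2 - b ^ 2| ≤ 1 := by
    rw [abs_mul]; norm_num
  rw [hsq, habs, four_mul_eq_one_sub_sq_sub_sq_iff ha hb]
  exact and_iff_right_of_imp (abs_sq_sub_sq_le_one_of_add_eq_one ha hb)
end
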